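/- arXiv:1303.5891 — 2 statements merged into one kernel-verified Lean document; each statement's English description precedes it below -/
import Mathlib

section
/- (Correctness of the fusion-generation algorithm) Let 𝓜₀ be a finite indexed family of machines over T with d_min(𝓜₀) = d, and let F_1, …, F_f be machines over T such that for each k ∈ {1, …, f}, F_k separates every pair of distinct states t ≠ t' with d_{𝓜_{k−1}}(t,t') = d_min(𝓜_{k−1}), where 𝓜_k denotes the family 𝓜₀ extended by F_1, …, F_k. Then d_min(𝓜_f) = d + f. In particular, if 𝓜₀ is a family of primaries with d_min(𝓜₀) = 1, then d_min(𝓜_f) = f + 1 > f, i.e., (F_1, …, F_f) is an (f, f)-fusion of 𝓜₀. -/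
open scoped Classical

/-- A machine over `T` (a closed partition of `T`): an equivalence relation on `T`
that is preserved by the transition function `δ`. -/
structure Machine (T : Type*) (E : Type*) (δ : T → E → T) where
  rel : T → T → Prop
  equiv : Equivalence rel
  closed : ∀ x y : T, rel x y → ∀ e : E, rel (δ x e) (δ y e)

/-- The distance `d_𝓜(t,t')`: the number of machines in the family `M` that
separate `t` and `t'`. -/
noncomputable def fdist {T E ι : Type*} {δ : T → E → T} [Fintype ι]
    (M : ι → Machine T E δ) (t t' : T) : ℕ :=
  (Finset.univ.filter fun i => ¬ (M i).rel t t').card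

/-- The minimum distance `d_min(𝓜)`: the minimum of `fdist M t t'` over all pairs
of distinct states `t ≠ t'`. -/
noncomputable def dmin {T E ι : Type*} {δ : T → E → T} [Fintype ι]
    (M : ι → Machine T E δ) : ℕ :=
  sInf {d : ℕ | ∃ t t' : T, t ≠ t' ∧ d = fdist M t t'}

/-- The family `𝓜_k`: the base family `M0` extended by the first `k` of the
machines `F 0, …, F (f-1)`. -/
noncomputable def extFam {T E ι : Type*} {δ : T → E → T} [Fintype ι] {f : ℕ}
    (M0 : ι → Machine T E δ) (F : Fin f → Machine T E δ)
    (k : ℕ) (hk : k ≤ f) : ι ⊕ Fin k → Machine T E δ :=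
  Sum.elim M0 (fun j => F (Fin.castLE hk j))

/-! Each `F k` raises the minimum distance by exactly one. A pair at minimum distance is
separated by `F k`, so it gains one, and `d_min` rises by at most one; every pair that `F k`
does not separate was already at distance at least `d_min + 1`. Induction on `k` then gives
`d_min(𝓜_f) = d + f`. -/

section Distance

variable {T E ι κ : Type*} {δ : T → E → T} [Fintype ι] [Fintype κ]

lemma fdist_sumElim (M : ι → Machine T E δ) (N : κ → Machine T E δ) (t t' : T) :
    fdist (Sum.elim M N) t t' = fdist M t t' + fdist N t t' := by
  simp only [fdist, Finset.card_filter, Fintype.sum_sum_type, Sum.elim_inl, Sum.elim_inr]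
  congr

lemma fdist_fin_zero (N : Fin 0 → Machine T E δ) (t t' : T) : fdist N t t' = 0 := by
  simp [fdist]

lemma fdist_fin_succ {k : ℕ} (N : Fin (k + 1) → Machine T E δ) (t t' : T) :
    fdist N t t' = fdist (N ∘ Fin.castSucc) t t' + if (N (Fin.last k)).rel t t' then 0 else 1 := by
  simp only [fdist, Finset.card_filter, Fin.sum_univ_castSucc, Function.comp_apply]
  split_ifs <;> rfl

lemma dmin_congr {M : ι → Machine T E δ} {N : κ → Machine T E δ}
    (h : ∀ t t', fdist M t t' = fdist N t t') : dmin M = dmin N := by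
  simp only [dmin, h]

lemma dmin_le_fdist (M : ι → Machine T E δ) {t t' : T} (h : t ≠ t') :
    dmin M ≤ fdist M t t' :=
  Nat.sInf_le ⟨t, t', h, rfl⟩

variable [Nontrivial T]

lemma exists_fdist_eq_dmin (M : ι → Machine T E δ) :
    ∃ t t' : T, t ≠ t' ∧ fdist M t t' = dmin M := by
  obtain ⟨t, t', h⟩ := exists_pair_ne T
  obtain ⟨s, s', hs, hmin⟩ : dmin M ∈ {d | ∃ t t' : T, t ≠ t' ∧ d = fdist M t t'} :=
    Nat.sInf_mem ⟨fdist M t t', t, t', h, rfl⟩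
  exact ⟨s, s', hs, hmin.symm⟩

lemma le_dmin_iff (M : ι → Machine T E δ) {n : ℕ} :
    n ≤ dmin M ↔ ∀ t t', t ≠ t' → n ≤ fdist M t t' := by
  obtain ⟨t, t', h⟩ := exists_pair_ne T
  rw [dmin, le_csInf_iff' (s := {d | ∃ t t' : T, t ≠ t' ∧ d = fdist M t t'})
    ⟨fdist M t t', t, t', h, rfl⟩]
  constructor
  · exact fun hn s s' hs => hn ⟨s, s', hs, rfl⟩
  · rintro hn _ ⟨s, s', hs, rfl⟩
    exact hn s s' hs

lemma dmin_eq_dmin_add_one {M : ι → Machine T E δ} {N : κ → Machine T E δ} {G : Machine T E δ}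
    (hN : ∀ t t', fdist N t t' = fdist M t t' + if G.rel t t' then 0 else 1)
    (hG : ∀ t t', t ≠ t' → fdist M t t' = dmin M → ¬ G.rel t t') :
    dmin N = dmin M + 1 := by
  apply le_antisymm
  · obtain ⟨t, t', ht, hmin⟩ := exists_fdist_eq_dmin M
    calc dmin N ≤ fdist N t t' := dmin_le_fdist N ht
      _ = dmin M + 1 := by rw [hN, if_neg (hG t t' ht hmin), hmin]
  · rw [le_dmin_iff]
    intro s s' hs
    have hM := dmin_le_fdist M hs
    rw [hN]
    rcases hM.eq_or_lt with hmin | hlt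
    · rw [if_neg (hG s s' hs hmin.symm), hmin]
    · omega

end Distance

section Extension

variable {T E ι : Type*} {δ : T → E → T} [Fintype ι] {f : ℕ}
  (M0 : ι → Machine T E δ) (F : Fin f → Machine T E δ)

lemma fdist_extFam_zero (t t' : T) : fdist (extFam M0 F 0 f.zero_le) t t' = fdist M0 t t' := by
  rw [extFam, fdist_sumElim, fdist_fin_zero, add_zero]

lemma fdist_extFam_succ {k : ℕ} (hk : k + 1 ≤ f) (t t' : T) :
    fdist (extFam M0 F (k + 1) hk) t t' =
      fdist (extFam M0 F k (Nat.le_of_succ_le hk)) t t' +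
        if (F ⟨k, hk⟩).rel t t' then 0 else 1 := by
  rw [extFam, extFam, fdist_sumElim, fdist_sumElim, fdist_fin_succ, add_assoc]
  rfl

lemma extFam_self : extFam M0 F f le_rfl = Sum.elim M0 F := by
  rfl

lemma dmin_extFam [Nontrivial T]
    (hsep : ∀ k : Fin f, ∀ t t' : T, t ≠ t' →
      fdist (extFam M0 F k.1 k.isLt.le) t t' = dmin (extFam M0 F k.1 k.isLt.le) →
      ¬ (F k).rel t t') :
    ∀ k (hk : k ≤ f), dmin (extFam M0 F k hk) = dmin M0 + k
  | 0, _ => dmin_congr (fdist_extFam_zero M0 F)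
  | k + 1, hk => by
    rw [dmin_eq_dmin_add_one (fdist_extFam_succ M0 F hk) (hsep ⟨k, hk⟩),
      dmin_extFam hsep k, add_assoc]

end Extension

theorem genFusion_correct_general {T E ι : Type*} [Nontrivial T] [Fintype ι]
    {δ : T → E → T} (M0 : ι → Machine T E δ) (f : ℕ) (F : Fin f → Machine T E δ)
    (d : ℕ) (hd : dmin M0 = d)
    (hsep : ∀ k : Fin f, ∀ t t' : T, t ≠ t' →
      fdist (extFam M0 F k.1 k.isLt.le) t t' = dmin (extFam M0 F k.1 k.isLt.le) →
      ¬ (F k).rel t t') :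
    dmin (Sum.elim M0 F) = d + f ∧ (d = 1 → dmin (Sum.elim M0 F) > f) := by
  have hfinal : dmin (Sum.elim M0 F) = d + f := by
    rw [← extFam_self, dmin_extFam M0 F hsep f le_rfl, hd]
  exact ⟨hfinal, fun hd1 => by omega⟩

/-- Correctness of the fusion-generation algorithm: if each `F k`
separates every minimum-distance pair of the family `𝓜_k = M0 ⊕ (F 0, …, F (k-1))`,
then `d_min(𝓜_f) = d + f`; in particular when `d = 1`, `(F 0, …, F (f-1))` is an
`(f, f)`-fusion of `M0`. -/
theorem genFusion_correct {T E ι : Type*} [Fintype T] [Nontrivial T] [Fintype ι]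
    {δ : T → E → T} (M0 : ι → Machine T E δ) (f : ℕ) (F : Fin f → Machine T E δ)
    (d : ℕ) (hd : dmin M0 = d)
    (hsep : ∀ k : Fin f, ∀ t t' : T, t ≠ t' →
      fdist (extFam M0 F k.1 k.isLt.le) t t' = dmin (extFam M0 F k.1 k.isLt.le) →
      ¬ (F k).rel t t') :
    dmin (Sum.elim M0 F) = d + f ∧ (d = 1 → dmin (Sum.elim M0 F) > f) :=
  genFusion_correct_general M0 f F d hd hsep
end

section
/- (Correctness of the incremental fusion step) Let 𝓟' = (P_i)_{i∈I}, 𝓕 = (F_j)_{j∈J} and 𝓖 = (G_l)_{l∈L} be finite indexed families of machines over T, let Q be a machine over T, and let f be a natural number. Let R_𝓕 denote the common refinement of 𝓕 (the equivalence relation relating x and y iff x ≈_{F_j} y for every j ∈ J), which is again a machine over T. Assume: (a) every pair of distinct states of T is separated by some member of the family 𝓟' ⊕ (Q); (b) for every j ∈ J, if x and y are related by every member of 𝓟' then x ≈_{F_j} y (each F_j is less than or equal to the RCP of 𝓟'); (c) every pair of distinct states of T separated by some member of 𝓟' is separated by more than f members of the combined family 𝓟' ⊕ 𝓕; (d) every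 pair of distinct states of T separated by Q or by R_𝓕 is separated by more than f members of the combined family (Q, R_𝓕) ⊕ 𝓖. Then every pair of distinct states of T is separated by more than f members of the combined family 𝓟' ⊕ (Q) ⊕ 𝓖, i.e., d_min(𝓟' ⊕ (Q) ⊕ 𝓖) > f. -/
open scoped Classical

/-- The common refinement of a family of machines: `x` and `y` are related iff every
member of the family relates them. It is again a machine over `T`. -/
def commonRefinement {T E J : Type*} {δ : T → E → T} (F : J → Machine T E δ) :
    Machine T E δ where
  rel x y := ∀ j : J, (F j).rel x y
  equiv := ⟨fun x j => (F j).equiv.refl x,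
            fun h j => (F j).equiv.symm (h j),
            fun h h' j => (F j).equiv.trans (h j) (h' j)⟩
  closed := fun x y h e j => (F j).closed x y (h j) e

/-!
Take distinct states `t, t'`. If some primary in `𝓟'` separates them, either no fusion in `𝓕`
does, and (c) already gives more than `f` separating primaries, or `R_𝓕` separates them, and then
(d) counts `R_𝓕` once where at least one primary is available to replace it. If no primary
separates them, then by (b) neither does `R_𝓕`, so by (a) `Q` does, and (d) is exactly the claim.
-/

section Distance

variable {T E : Type*} {δ : T → E → T}

lemma fdist_sum_elim {α β : Type*} [Fintype α] [Fintype β]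
    (A : α → Machine T E δ) (B : β → Machine T E δ) (t t' : T) :
    fdist (Sum.elim A B) t t' = fdist A t t' + fdist B t t' := by
  simp only [fdist, Finset.card_filter, Fintype.sum_sum_type]
  rfl

lemma fdist_eq_zero_iff {ι : Type*} [Fintype ι] {M : ι → Machine T E δ} {t t' : T} :
    fdist M t t' = 0 ↔ ∀ i, (M i).rel t t' := by
  simp [fdist, Finset.filter_eq_empty_iff]

lemma fdist_pos_iff {ι : Type*} [Fintype ι] {M : ι → Machine T E δ} {t t' : T} :
    0 < fdist M t t' ↔ ∃ i, ¬ (M i).rel t t' := by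
  rw [Nat.pos_iff_ne_zero, Ne, fdist_eq_zero_iff, not_forall]

lemma fdist_unit (Q : Machine T E δ) (t t' : T) :
    fdist (fun _ : Unit => Q) t t' = if Q.rel t t' then 0 else 1 := by
  simp only [fdist, Finset.card_filter, Finset.univ_unique, Finset.sum_singleton]
  split_ifs <;> simp_all

lemma fdist_pair (Q R : Machine T E δ) (t t' : T) :
    fdist ![Q, R] t t' = (if Q.rel t t' then 0 else 1) + (if R.rel t t' then 0 else 1) := by
  simp only [fdist, Finset.card_filter, Fin.sum_univ_two]
  split_ifs <;> simp_all

lemma lt_dmin_of_forall_lt_fdist [Nontrivial T] {ι : Type*} [Fintype ι]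
    {M : ι → Machine T E δ} {f : ℕ} (h : ∀ t t' : T, t ≠ t' → f < fdist M t t') :
    f < dmin M := by
  obtain ⟨x, y, hxy⟩ := exists_pair_ne T
  obtain ⟨t, t', htt, hmin⟩ := Nat.sInf_mem (⟨_, x, y, hxy, rfl⟩ :
    {d : ℕ | ∃ t t' : T, t ≠ t' ∧ d = fdist M t t'}.Nonempty)
  rw [dmin, hmin]
  exact h t t' htt

end Distance

theorem incFusion_correct_general {T E I J L : Type*} [Nontrivial T]
    [Fintype I] [Fintype J] [Fintype L] {δ : T → E → T}
    (P' : I → Machine T E δ) (F : J → Machine T E δ) (G : L → Machine T E δ)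
    (Q : Machine T E δ) (f : ℕ)
    (ha : ∀ t t' : T, t ≠ t' →
      ∃ i : I ⊕ Unit, ¬ (Sum.elim P' (fun _ : Unit => Q) i).rel t t')
    (hb : ∀ j : J, ∀ x y : T, (∀ i : I, (P' i).rel x y) → (F j).rel x y)
    (hc : ∀ t t' : T, t ≠ t' → (∃ i : I, ¬ (P' i).rel t t') →
      fdist (Sum.elim P' F) t t' > f)
    (hd : ∀ t t' : T, t ≠ t' →
      (¬ Q.rel t t' ∨ ¬ (commonRefinement F).rel t t') →
      fdist (Sum.elim ![Q, commonRefinement F] G) t t' > f) :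
    dmin (Sum.elim (Sum.elim P' (fun _ : Unit => Q)) G) > f := by
  refine lt_dmin_of_forall_lt_fdist fun t t' htt => ?_
  rw [fdist_sum_elim, fdist_sum_elim, fdist_unit]
  by_cases hP : ∃ i, ¬ (P' i).rel t t'
  · by_cases hR : (commonRefinement F).rel t t'
    · have hcount := hc t t' htt hP
      rw [fdist_sum_elim, fdist_eq_zero_iff.mpr hR] at hcount
      omega
    · have hPpos := fdist_pos_iff.mpr hP
      have hcount := hd t t' htt (Or.inr hR)
      rw [fdist_sum_elim, fdist_pair, if_neg hR] at hcount
      split_ifs at hcount ⊢ <;> omega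
  · push Not at hP
    have hR : (commonRefinement F).rel t t' := fun j => hb j t t' hP
    have hQ : ¬ Q.rel t t' := by
      obtain ⟨i | _, hi⟩ := ha t t' htt
      · exact absurd (hP i) hi
      · exact hi
    have hcount := hd t t' htt (Or.inl hQ)
    rw [fdist_sum_elim, fdist_pair, if_neg hQ, if_pos hR] at hcount
    rw [if_neg hQ, fdist_eq_zero_iff.mpr hP]
    omega

/-- Correctness of the incremental fusion step: if (a) the family
`𝓟' ⊕ (Q)` determines the state of `T`, (b) each `F j` is below the RCP of `𝓟'`,
(c) every pair separated by some member of `𝓟'` is separated by more than `f`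
members of `𝓟' ⊕ 𝓕`, and (d) every pair separated by `Q` or by the common
refinement `R_𝓕` is separated by more than `f` members of `(Q, R_𝓕) ⊕ 𝓖`,
then `d_min(𝓟' ⊕ (Q) ⊕ 𝓖) > f`. -/
theorem incFusion_correct {T E I J L : Type*} [Fintype T] [Nontrivial T]
    [Fintype I] [Fintype J] [Fintype L] {δ : T → E → T}
    (P' : I → Machine T E δ) (F : J → Machine T E δ) (G : L → Machine T E δ)
    (Q : Machine T E δ) (f : ℕ)
    (ha : ∀ t t' : T, t ≠ t' →
      ∃ i : I ⊕ Unit, ¬ (Sum.elim P' (fun _ : Unit => Q) i).rel t t')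
    (hb : ∀ j : J, ∀ x y : T, (∀ i : I, (P' i).rel x y) → (F j).rel x y)
    (hc : ∀ t t' : T, t ≠ t' → (∃ i : I, ¬ (P' i).rel t t') →
      fdist (Sum.elim P' F) t t' > f)
    (hd : ∀ t t' : T, t ≠ t' →
      (¬ Q.rel t t' ∨ ¬ (commonRefinement F).rel t t') →
      fdist (Sum.elim ![Q, commonRefinement F] G) t t' > f) :
    dmin (Sum.elim (Sum.elim P' (fun _ : Unit => Q)) G) > f :=
  incFusion_correct_general P' F G Q f ha hb hc hd
end
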